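/- Let V be a faithful finite-dimensional rational representation of a linear algebraic group G over an algebraically closed field, and let E_G be a principal G-bundle over an irreducible complete variety M with associated vector bundle E_V. If σ is an automorphism of E_G whose induced automorphism of E_V is the identity, then σ is the identity automorphism of E_G. -/

import Mathlib

open AlgebraicGeometry CategoryTheory Opposite Matrix MvPolynomial

universe u

/-- Restriction map of the structure sheaf of a scheme. -/
abbrev sheafRes (X : Scheme.{u}) {U V : X.Opens} (h : V ≤ U) : Γ(X, U) ⟶ Γ(X, V) :=
  X.presheaf.map (homOfLE h).op

/-- Coordinates of an element of `GL n R`: the entries of the matrix together with the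
entries of its inverse. -/
def glCoordsR {R : Type u} [CommRing R] {n : ℕ} (g : GL (Fin n) R) :
    (Fin n × Fin n) ⊕ (Fin n × Fin n) → R :=
  Sum.elim (fun p => (g : Matrix (Fin n) (Fin n) R) p.1 p.2)
    (fun p => ((g⁻¹ : GL (Fin n) R) : Matrix (Fin n) (Fin n) R) p.1 p.2)

/-- The `R`-points of the linear algebraic group `G ⊆ GL n` cut out over `k` by the set
of polynomials `I` (in the matrix entries and the entries of the inverse), where
`φ : k →+* R` is the `k`-algebra structure of `R`. -/
def grpMem {k : Type u} [Field k] {n : ℕ}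
    (I : Set (MvPolynomial ((Fin n × Fin n) ⊕ (Fin n × Fin n)) k))
    {R : Type u} [CommRing R] (φ : k →+* R) (g : GL (Fin n) R) : Prop :=
  ∀ p ∈ I, eval₂ φ (glCoordsR g) p = 0

/-- The matrix of the rational representation defined by the family of polynomials `Q`,
evaluated on a point of `GL n R`. -/
def repMat {k : Type u} [Field k] {n v : ℕ}
    (Q : (Fin v × Fin v) ⊕ (Fin v × Fin v) →
      MvPolynomial ((Fin n × Fin n) ⊕ (Fin n × Fin n)) k)
    {R : Type u} [CommRing R] (φ : k →+* R) (g : GL (Fin n) R) :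
    Matrix (Fin v) (Fin v) R :=
  fun a b => eval₂ φ (glCoordsR g) (Q (Sum.inl (a, b)))

/-- The matrix of the inverse in the rational representation defined by `Q`. -/
def repMatInv {k : Type u} [Field k] {n v : ℕ}
    (Q : (Fin v × Fin v) ⊕ (Fin v × Fin v) →
      MvPolynomial ((Fin n × Fin n) ⊕ (Fin n × Fin n)) k)
    {R : Type u} [CommRing R] (φ : k →+* R) (g : GL (Fin n) R) :
    Matrix (Fin v) (Fin v) R :=
  fun a b => eval₂ φ (glCoordsR g) (Q (Sum.inr (a, b)))

/-!
The `k`-points of the kernel of `ρ` on `G` are trivial by faithfulness, so by the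
Nullstellensatz every function `x_ab - δ_ab` on `GL n` lies in the radical of the ideal of the
scheme-theoretic kernel. A local section `s` of the adjoint bundle with `ρ(s) = 1` is a
`Γ(U)`-point of that kernel, so each `s_ab - δ_ab` is nilpotent in `Γ(U)`, hence zero because
`M` is reduced.
-/

theorem MvPolynomial.eval₂_eq_zero_of_forall_mem_zeroLocus {σ k R : Type*} [Field k]
    [IsAlgClosed k] [Finite σ] [CommRing R] [IsReduced R] {φ : k →+* R} {w : σ → R}
    {J : Ideal (MvPolynomial σ k)} (hJ : J ≤ RingHom.ker (eval₂Hom φ w))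
    {p : MvPolynomial σ k} (hp : ∀ x ∈ zeroLocus k J, eval x p = 0) :
    eval₂ φ w p = 0 := by
  have hrad : p ∈ J.radical := by
    rw [← vanishingIdeal_zeroLocus_eq_radical (K := k)]
    exact fun x hx => by simpa [coe_aeval_eq_eval] using hp x hx
  obtain ⟨m, hm⟩ := hrad
  exact IsNilpotent.eq_zero ⟨m, by rw [← coe_eval₂Hom, ← map_pow]; exact hJ hm⟩

theorem Matrix.range_subset_ker_iff {m A B : Type*} [Fintype m] [DecidableEq m]
    [CommRing A] [CommRing B] (f : A →+* B) (M : Matrix m m A) :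
    Set.range (fun p : m × m => M p.1 p.2) ⊆ RingHom.ker f ↔ f.mapMatrix M = 0 := by
  simp only [Set.range_subset_iff, Prod.forall, ← Matrix.ext_iff]
  rfl

abbrev GLCoord (n : ℕ) : Type := (Fin n × Fin n) ⊕ (Fin n × Fin n)

noncomputable section RepKernel

variable {k : Type u} [Field k] {n v : ℕ} {I : Set (MvPolynomial (GLCoord n) k)}
  {Q : (Fin v × Fin v) ⊕ (Fin v × Fin v) → MvPolynomial (GLCoord n) k}

def glMatrixVar (k : Type u) [Field k] (n : ℕ) :
    Matrix (Fin n) (Fin n) (MvPolynomial (GLCoord n) k) :=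
  of fun a b => X (Sum.inl (a, b))

def glInverseVar (k : Type u) [Field k] (n : ℕ) :
    Matrix (Fin n) (Fin n) (MvPolynomial (GLCoord n) k) :=
  of fun a b => X (Sum.inr (a, b))

def repMatrixVar (Q : (Fin v × Fin v) ⊕ (Fin v × Fin v) → MvPolynomial (GLCoord n) k) :
    Matrix (Fin v) (Fin v) (MvPolynomial (GLCoord n) k) :=
  of fun a b => Q (Sum.inl (a, b))

def RepFaithfulOnPoints (I : Set (MvPolynomial (GLCoord n) k))
    (Q : (Fin v × Fin v) ⊕ (Fin v × Fin v) → MvPolynomial (GLCoord n) k) : Prop :=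
  ∀ g : GL (Fin n) k, grpMem I (RingHom.id k) g → repMat Q (RingHom.id k) g = 1 → g = 1

/-- The ideal of the scheme-theoretic kernel of `ρ` on `G`. -/
def repKerIdeal (I : Set (MvPolynomial (GLCoord n) k))
    (Q : (Fin v × Fin v) ⊕ (Fin v × Fin v) → MvPolynomial (GLCoord n) k) :
    Ideal (MvPolynomial (GLCoord n) k) :=
  Ideal.span (I ∪
    Set.range (fun p : Fin n × Fin n => (glMatrixVar k n * glInverseVar k n - 1) p.1 p.2) ∪
    Set.range (fun p : Fin n × Fin n => (glInverseVar k n * glMatrixVar k n - 1) p.1 p.2) ∪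
    Set.range (fun p : Fin v × Fin v => (repMatrixVar Q - 1) p.1 p.2))

section Evaluation

variable {R : Type u} [CommRing R] (φ : k →+* R) (g : GL (Fin n) R)

theorem mapMatrix_glMatrixVar :
    (eval₂Hom φ (glCoordsR g)).mapMatrix (glMatrixVar k n) = g := by
  ext a b
  simp [glMatrixVar, glCoordsR]

theorem mapMatrix_glInverseVar :
    (eval₂Hom φ (glCoordsR g)).mapMatrix (glInverseVar k n) = ↑g⁻¹ := by
  ext a b
  simp [glInverseVar, glCoordsR]

theorem mapMatrix_repMatrixVar :
    (eval₂Hom φ (glCoordsR g)).mapMatrix (repMatrixVar Q) = repMat Q φ g :=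
  rfl

end Evaluation

theorem repKerIdeal_le_ker_iff {B : Type*} [CommRing B] (f : MvPolynomial (GLCoord n) k →+* B) :
    repKerIdeal I Q ≤ RingHom.ker f ↔ I ⊆ RingHom.ker f ∧
      f.mapMatrix (glMatrixVar k n) * f.mapMatrix (glInverseVar k n) = 1 ∧
      f.mapMatrix (glInverseVar k n) * f.mapMatrix (glMatrixVar k n) = 1 ∧
      f.mapMatrix (repMatrixVar Q) = 1 := by
  simp only [repKerIdeal, Ideal.span_le, Set.union_subset_iff, Matrix.range_subset_ker_iff,
    map_sub, map_mul, map_one, sub_eq_zero, and_assoc]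

theorem repKerIdeal_le_ker_eval₂Hom {R : Type u} [CommRing R] {φ : k →+* R} {g : GL (Fin n) R}
    (hg : grpMem I φ g) (hρ : repMat Q φ g = 1) :
    repKerIdeal I Q ≤ RingHom.ker (eval₂Hom φ (glCoordsR g)) := by
  rw [repKerIdeal_le_ker_iff, mapMatrix_glMatrixVar, mapMatrix_glInverseVar,
    mapMatrix_repMatrixVar]
  exact ⟨hg, g.mul_inv, g.inv_mul, hρ⟩

theorem mapMatrix_glMatrixVar_eq_one_of_mem_zeroLocus (hfaithful : RepFaithfulOnPoints I Q)
    {x : GLCoord n → k} (hx : x ∈ zeroLocus k (repKerIdeal I Q)) :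
    (eval x).mapMatrix (glMatrixVar k n) = 1 := by
  have hker : repKerIdeal I Q ≤ RingHom.ker (eval x) := fun p hp => by
    simpa [coe_aeval_eq_eval] using hx p hp
  obtain ⟨hI, hmul, hinv, hρ⟩ := (repKerIdeal_le_ker_iff _).1 hker
  let g₀ : GL (Fin n) k := ⟨_, _, hmul, hinv⟩
  have hcoords : glCoordsR g₀ = x := by
    funext c
    rcases c with ⟨a, b⟩ | ⟨a, b⟩ <;> simp [g₀, glCoordsR, glMatrixVar, glInverseVar]
  have hg₀ : g₀ = 1 := hfaithful g₀ (by rw [grpMem, hcoords]; exact hI)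
    (by rw [← mapMatrix_repMatrixVar, hcoords]; exact hρ)
  simpa [g₀] using congrArg Units.val hg₀

theorem eq_one_of_grpMem_of_repMat_eq_one [IsAlgClosed k] (hfaithful : RepFaithfulOnPoints I Q)
    {R : Type u} [CommRing R] [IsReduced R] {φ : k →+* R} {g : GL (Fin n) R}
    (hg : grpMem I φ g) (hρ : repMat Q φ g = 1) : g = 1 := by
  ext a b
  have hentry : (eval₂Hom φ (glCoordsR g)).mapMatrix (glMatrixVar k n - 1) a b = 0 :=
    eval₂_eq_zero_of_forall_mem_zeroLocus (repKerIdeal_le_ker_eval₂Hom hg hρ) fun x hx => by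
      change (eval x).mapMatrix (glMatrixVar k n - 1) a b = 0
      rw [map_sub, map_one, mapMatrix_glMatrixVar_eq_one_of_mem_zeroLocus hfaithful hx,
        sub_self, Matrix.zero_apply]
  rwa [map_sub, map_one, mapMatrix_glMatrixVar, Matrix.sub_apply, sub_eq_zero,
    ← Units.val_one] at hentry

end RepKernel

theorem automorphism_trivial_of_faithful_rep_trivial_general
    {k : Type u} [Field k] [IsAlgClosed k] {n v : ℕ}
    (I : Set (MvPolynomial ((Fin n × Fin n) ⊕ (Fin n × Fin n)) k))
    (Q : (Fin v × Fin v) ⊕ (Fin v × Fin v) →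
      MvPolynomial ((Fin n × Fin n) ⊕ (Fin n × Fin n)) k)
    -- `ρ` is faithful:
    (hρ_faithful : ∀ g : GL (Fin n) k, grpMem I (RingHom.id k) g →
      repMat Q (RingHom.id k) g = 1 → g = 1)
    -- `M` is an irreducible complete variety over `k`:
    (X : Scheme.{u}) [IsIntegral X]
    -- the structure map `k → Γ(X, U)` of an open subset:
    (cst : ∀ U : X.Opens, k →+* Γ(X, U))
    -- the principal `G`-bundle `E_G`, as a `G`-valued transition cocycle:
    (ι : Type u) (U : ι → X.Opens)
    (g : ∀ i j : ι, GL (Fin n) Γ(X, U i ⊓ U j))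
    -- the automorphism `σ` of `E_G`, as local `G`-valued sections of the adjoint bundle:
    (s : ∀ i : ι, GL (Fin n) Γ(X, U i))
    (hsG : ∀ i, grpMem I (cst (U i)) (s i))
    -- the induced automorphism of the associated vector bundle `E_V` is the identity:
    (htriv : ∀ i : ι, repMat Q (cst (U i)) (s i) = 1) :
    -- conclusion: `σ` is the identity automorphism of `E_G`:
    ∀ i : ι, s i = 1 :=
  fun i => eq_one_of_grpMem_of_repMat_eq_one hρ_faithful (hsG i) (htriv i)

/-- Let `G ⊆ GL n` be a linear algebraic group over an algebraically closed field `k` of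
characteristic zero (cut out by the polynomials `I`, with `R`-points `grpMem I`), let
`ρ` be a faithful finite-dimensional rational representation of `G` (given by the
polynomials `Q`), let `M` be an irreducible complete variety over `k` (an integral
scheme, separated, universally closed and of finite type over `Spec k`), and let `E_G`
be a principal `G`-bundle over `M`, given by a transition cocycle `g i j` with values in
`G` on an open cover `U i`.  Let `σ` be an automorphism of `E_G`, given by local sections
`s i` of the adjoint bundle, i.e. `G`-valued functions with `sᵢ gᵢⱼ = gᵢⱼ sⱼ`.  If the
automorphism of the associated vector bundle `E_V` induced by `σ` (given locally by
`ρ(s i)`) is the identity, then `σ` is the identity automorphism of `E_G`. -/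
theorem automorphism_trivial_of_faithful_rep_trivial
    {k : Type u} [Field k] [IsAlgClosed k] [CharZero k] {n v : ℕ}
    (I : Set (MvPolynomial ((Fin n × Fin n) ⊕ (Fin n × Fin n)) k))
    -- `G` is a subgroup functor of `GL n`:
    (hgrp_one : ∀ (R : Type u) [CommRing R] (φ : k →+* R), grpMem I φ (1 : GL (Fin n) R))
    (hgrp_mul : ∀ (R : Type u) [CommRing R] (φ : k →+* R) (g h : GL (Fin n) R),
      grpMem I φ g → grpMem I φ h → grpMem I φ (g * h))
    (hgrp_inv : ∀ (R : Type u) [CommRing R] (φ : k →+* R) (g : GL (Fin n) R),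
      grpMem I φ g → grpMem I φ g⁻¹)
    (Q : (Fin v × Fin v) ⊕ (Fin v × Fin v) →
      MvPolynomial ((Fin n × Fin n) ⊕ (Fin n × Fin n)) k)
    -- `ρ` is a rational representation of `G` on `V = k^v`:
    (hρ_inv : ∀ (R : Type u) [CommRing R] (φ : k →+* R) (g : GL (Fin n) R),
      grpMem I φ g → repMat Q φ g * repMatInv Q φ g = 1 ∧ repMatInv Q φ g * repMat Q φ g = 1)
    (hρ_one : ∀ (R : Type u) [CommRing R] (φ : k →+* R),
      repMat Q φ (1 : GL (Fin n) R) = 1)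
    (hρ_mul : ∀ (R : Type u) [CommRing R] (φ : k →+* R) (g h : GL (Fin n) R),
      grpMem I φ g → grpMem I φ h → repMat Q φ (g * h) = repMat Q φ g * repMat Q φ h)
    -- `ρ` is faithful:
    (hρ_faithful : ∀ g : GL (Fin n) k, grpMem I (RingHom.id k) g →
      repMat Q (RingHom.id k) g = 1 → g = 1)
    -- `M` is an irreducible complete variety over `k`:
    (X : Scheme.{u}) [IsIntegral X] (f : X ⟶ Spec (CommRingCat.of k))
    [IsSeparated f] [UniversallyClosed f] [LocallyOfFiniteType f]
    -- the structure map `k → Γ(X, U)` of an open subset: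
    (cst : ∀ U : X.Opens, k →+* Γ(X, U))
    (hcst : ∀ U : X.Opens, cst U =
      (sheafRes X (le_top : U ≤ ⊤)).hom.comp ((f.appTop).hom.comp
        ((Scheme.ΓSpecIso (CommRingCat.of k)).inv : CommRingCat.of k ⟶ _).hom))
    -- the principal `G`-bundle `E_G`, as a `G`-valued transition cocycle:
    (ι : Type u) (U : ι → X.Opens) (hcover : ∀ x : X, ∃ i, x ∈ U i)
    (g : ∀ i j : ι, GL (Fin n) Γ(X, U i ⊓ U j))
    (hgG : ∀ i j, grpMem I (cst (U i ⊓ U j)) (g i j))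
    (hg_id : ∀ i, g i i = 1)
    (hg_cocycle : ∀ i j l : ι,
      GeneralLinearGroup.map (sheafRes X (inf_le_left : U i ⊓ U j ⊓ U l ≤ U i ⊓ U j)).hom
          (g i j) *
        GeneralLinearGroup.map (sheafRes X (le_inf (inf_le_left.trans inf_le_right)
          inf_le_right : U i ⊓ U j ⊓ U l ≤ U j ⊓ U l)).hom (g j l) =
      GeneralLinearGroup.map (sheafRes X (inf_le_inf inf_le_left le_rfl :
          U i ⊓ U j ⊓ U l ≤ U i ⊓ U l)).hom (g i l))
    -- the automorphism `σ` of `E_G`, as local `G`-valued sections of the adjoint bundle: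
    (s : ∀ i : ι, GL (Fin n) Γ(X, U i))
    (hsG : ∀ i, grpMem I (cst (U i)) (s i))
    (hs_compat : ∀ i j : ι,
      GeneralLinearGroup.map (sheafRes X (inf_le_left : U i ⊓ U j ≤ U i)).hom (s i) * g i j =
        g i j * GeneralLinearGroup.map (sheafRes X (inf_le_right : U i ⊓ U j ≤ U j)).hom (s j))
    -- the induced automorphism of the associated vector bundle `E_V` is the identity:
    (htriv : ∀ i : ι, repMat Q (cst (U i)) (s i) = 1) :
    -- conclusion: `σ` is the identity automorphism of `E_G`:
    ∀ i : ι, s i = 1 :=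
  automorphism_trivial_of_faithful_rep_trivial_general I Q hρ_faithful X cst ι U g s hsG htriv
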